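/- Let ρ ∈ P(Ω), κ ∈ (0,∞), and let ν_κ ∈ M₊(Ω) be a minimizer of J_{ρ,κ}. Define C_{ρ,κ} := sup_{y ∈ Ω} ρ(B(y, κπ/2)), where B(y,r) is the open ball of radius r around y. Then ‖ν_κ‖ ≤ 4 C_{ρ,κ}. -/

import Mathlib

open scoped Classical
open MeasureTheory ENNReal Filter Topology Real
open scoped NNReal

noncomputable section

/-- The entropy function `φ` with `φ(s) = s log s - s + 1` for `s > 0`, `φ(0) = 1`. -/
def phiEnt (s : ℝ≥0∞) : ℝ≥0∞ :=
  if s = 0 then 1 else if s = ⊤ then ⊤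
  else ENNReal.ofReal (s.toReal * Real.log s.toReal - s.toReal + 1)

/-- Kullback–Leibler divergence of `σ` with respect to `μ`. -/
def KLdiv {X : Type*} [MeasurableSpace X] (σ μ : Measure X) : ℝ≥0∞ :=
  if σ ≪ μ then ∫⁻ x, phiEnt (σ.rnDeriv μ x) ∂μ else ⊤

/-- The cost `ĉ_κ(x,y) = -2 log cos(d(x,y)/κ)` for `d(x,y) ≤ κπ/2`, `∞` otherwise. -/
def hkCost {X : Type*} [PseudoMetricSpace X] (κ : ℝ) (x y : X) : ℝ≥0∞ :=
  if dist x y < κ * π / 2 then ENNReal.ofReal (-2 * Real.log (Real.cos (dist x y / κ))) else ⊤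

/-- Squared Hellinger–Kantorovich distance with length scale `κ`. -/
def HK2 {X : Type*} [MeasurableSpace X] [PseudoMetricSpace X] (κ : ℝ) (μ ν : Measure X) : ℝ≥0∞ :=
  ⨅ (γ : Measure (X × X)) (_ : IsFiniteMeasure γ),
    (∫⁻ p, hkCost κ p.1 p.2 ∂γ) + KLdiv (γ.map Prod.fst) μ + KLdiv (γ.map Prod.snd) ν

abbrev Ed (d : ℕ) : Type := EuclideanSpace ℝ (Fin d)

/-- Truncated cosine `Cos(s) = cos(min(|s|, π/2))`. -/
def tcos (s : ℝ) : ℝ := Real.cos (min |s| (π / 2))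

/-- Squared Hellinger distance. -/
def Hell2 {X : Type*} [MeasurableSpace X] (μ ν : Measure X) : ℝ≥0∞ :=
  ∫⁻ x, ENNReal.ofReal ((Real.sqrt ((μ.rnDeriv (μ + ν)) x).toReal
      - Real.sqrt ((ν.rnDeriv (μ + ν)) x).toReal) ^ 2) ∂(μ + ν)

/-- Squared Wasserstein-2 distance (value `∞` when no coupling exists). -/
def W2 {X : Type*} [MeasurableSpace X] [PseudoMetricSpace X] (μ ν : Measure X) : ℝ≥0∞ :=
  ⨅ (γ : Measure (X × X)) (_ : γ.map Prod.fst = μ) (_ : γ.map Prod.snd = ν),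
    ∫⁻ p, ENNReal.ofReal (dist p.1 p.2 ^ 2) ∂γ

/-- Borel σ-algebra on the space of finite measures with the weak* topology. -/
instance (X : Type*) [TopologicalSpace X] [MeasurableSpace X] [OpensMeasurableSpace X] :
    MeasurableSpace (FiniteMeasure X) := borel _

instance (X : Type*) [TopologicalSpace X] [MeasurableSpace X] [OpensMeasurableSpace X] :
    BorelSpace (FiniteMeasure X) := ⟨rfl⟩

/-- The set `𝔠` of nonnegative measures of total mass at most `M`. -/
def cSet (X : Type*) [TopologicalSpace X] [MeasurableSpace X] [OpensMeasurableSpace X]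
    (M : ℝ≥0) : Set (FiniteMeasure X) := {μ | μ.mass ≤ M}

/-- The barycenter functional `J_{Λ,κ}`. -/
def JCont {X : Type*} [MeasurableSpace X] [PseudoMetricSpace X] [OpensMeasurableSpace X]
    {M : ℝ≥0} (Λ : Measure (cSet X M)) (κ : ℝ) (ν : Measure X) : ℝ≥0∞ :=
  ∫⁻ μ : cSet X M, HK2 κ ((μ : FiniteMeasure X) : Measure X) ν ∂Λ

/-- Barycenter functional for the limit scales `κ∞ = 0` (Hellinger) and `κ∞ = ∞` (Wasserstein). -/
def JContGen {X : Type*} [MeasurableSpace X] [PseudoMetricSpace X] [OpensMeasurableSpace X]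
    {M : ℝ≥0} (Λ : Measure (cSet X M)) (κinf : ℝ≥0∞) (ν : Measure X) : ℝ≥0∞ :=
  if κinf = 0 then ∫⁻ μ : cSet X M, Hell2 ((μ : FiniteMeasure X) : Measure X) ν ∂Λ
  else if κinf = ⊤ then ∫⁻ μ : cSet X M, W2 ((μ : FiniteMeasure X) : Measure X) ν ∂Λ
  else ∫⁻ μ : cSet X M, HK2 κinf.toReal ((μ : FiniteMeasure X) : Measure X) ν ∂Λ

/-- The barycenter functional `J_{ρ,κ}` for Dirac input measures distributed as `ρ`. -/
def JDirac {X : Type*} [MeasurableSpace X] [PseudoMetricSpace X]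
    (ρ : Measure X) (κ : ℝ) (ν : Measure X) : ℝ≥0∞ :=
  ∫⁻ x, HK2 κ (Measure.dirac x) ν ∂ρ

/-- The dual constraint function `F_{ρ,κ}(ψ)`. -/
def Fcon {X : Type*} [MeasurableSpace X] [PseudoMetricSpace X]
    (ρ : Measure X) (κ : ℝ) (ψ : X → ℝ) (y : X) : ℝ :=
  ∫ x, tcos (dist x y / κ) ^ 2 / (1 - ψ x) ∂ρ

/-- Admissibility for the dual problem `(D_{ρ,κ})`. -/
def DualAdm {X : Type*} [MeasurableSpace X] [PseudoMetricSpace X]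
    (ρ : Measure X) (κ : ℝ) (ψ : X → ℝ) : Prop :=
  Continuous ψ ∧ (∀ x, ψ x < 1) ∧ ∀ y, Fcon ρ κ ψ y ≤ 1

/-- Optimality for the dual problem `(D_{ρ,κ})`. -/
def DualOpt {X : Type*} [MeasurableSpace X] [PseudoMetricSpace X]
    (ρ : Measure X) (κ : ℝ) (ψ : X → ℝ) : Prop :=
  DualAdm ρ κ ψ ∧ ∀ ψ' : X → ℝ, DualAdm ρ κ ψ' → ∫ x, ψ' x ∂ρ ≤ ∫ x, ψ x ∂ρ

/-- `ν` minimizes `J_{ρ,κ}` over the nonnegative finite measures. -/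
def PrimalMin {X : Type*} [MeasurableSpace X] [PseudoMetricSpace X]
    (ρ : Measure X) (κ : ℝ) (ν : Measure X) : Prop :=
  IsFiniteMeasure ν ∧ ∀ ν' : Measure X, IsFiniteMeasure ν' → JDirac ρ κ ν ≤ JDirac ρ κ ν'

/-- Support of a measure. -/
def msupport {X : Type*} [TopologicalSpace X] [MeasurableSpace X] (μ : Measure X) : Set X :=
  {x | ∀ U ∈ nhds x, 0 < μ U}

/-- A measure is discrete if it is a countable sum of weighted Dirac measures. -/
def IsDiscreteMeas {X : Type*} [MeasurableSpace X] (μ : Measure X) : Prop :=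
  ∃ (x : ℕ → X) (c : ℕ → ℝ≥0∞), μ = Measure.sum fun n => c n • Measure.dirac (x n)

/-- The dual constraint set `Q_κ`. -/
def QSet (X : Type*) [PseudoMetricSpace X] (κ : ℝ) : Set ((X → ℝ) × (X → ℝ)) :=
  {p | Continuous p.1 ∧ Continuous p.2 ∧ (∀ x, p.1 x ≤ 1) ∧ (∀ y, p.2 y ≤ 1) ∧
    ∀ x y, tcos (dist x y / κ) ^ 2 ≤ (1 - p.1 x) * (1 - p.2 y)}

/-!
Testing against the zero measure gives `J(ν) ≤ J(0) ≤ 1`. For a single Dirac input, a coupling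
of finite cost and entropy between `δₓ` and `ν` lives on `{x} × B(x, κπ/2)`, and bounding `φ` from
below by its supporting lines of slopes `± log √b`, where `b = ν(B(x, κπ/2))`, gives
`HK²(δₓ, ν) ≥ 1 + ‖ν‖ - 2√b`. Integrating against `ρ`, with Jensen for the square root and
Fubini for `∫ ν(B(x, κπ/2)) dρ(x) ≤ C_{ρ,κ} ‖ν‖`, yields `‖ν‖ ≤ 2 √(C_{ρ,κ} ‖ν‖)`.
-/

lemma ENNReal.ofReal_sub_add_le_of_le_add_ofReal {A : ℝ≥0∞} {p q r : ℝ} (hq : 0 ≤ q)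
    (hqr : q ≤ r) (h : ENNReal.ofReal p ≤ A + ENNReal.ofReal q) :
    ENNReal.ofReal (p - q + r) ≤ A + ENNReal.ofReal r :=
  calc ENNReal.ofReal (p - q + r) = ENNReal.ofReal (p + (r - q)) := by ring_nf
    _ ≤ ENNReal.ofReal p + ENNReal.ofReal (r - q) := ENNReal.ofReal_add_le
    _ ≤ A + ENNReal.ofReal q + ENNReal.ofReal (r - q) := by gcongr
    _ = A + ENNReal.ofReal r := by
        rw [add_assoc, ← ENNReal.ofReal_add hq (sub_nonneg.2 hqr), add_sub_cancel]

lemma ENNReal.le_four_mul_of_le_two_mul_rpow_half {a c : ℝ≥0∞} (ha : a ≠ ⊤)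
    (h : a ≤ 2 * (c * a) ^ (1 / 2 : ℝ)) : a ≤ 4 * c := by
  rcases eq_or_ne a 0 with rfl | ha₀
  · exact zero_le
  have hsq : a * a ≤ 4 * c * a :=
    calc a * a ≤ (2 * (c * a) ^ (1 / 2 : ℝ)) * (2 * (c * a) ^ (1 / 2 : ℝ)) := mul_le_mul' h h
      _ = 4 * ((c * a) ^ (1 / 2 : ℝ) * (c * a) ^ (1 / 2 : ℝ)) := by ring
      _ = 4 * c * a := by
          rw [← ENNReal.rpow_add_of_nonneg _ _ (by norm_num) (by norm_num)]
          norm_num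
          ring
  exact (ENNReal.mul_le_mul_iff_left ha₀ ha).1 hsq

lemma lintegral_rpow_le_rpow_lintegral {α : Type*} [MeasurableSpace α] {μ : Measure α}
    [IsProbabilityMeasure μ] {f : α → ℝ≥0∞} (hf : AEMeasurable f μ) {p : ℝ} (hp₀ : 0 ≤ p)
    (hp₁ : p ≤ 1) : ∫⁻ a, f a ^ p ∂μ ≤ (∫⁻ a, f a ∂μ) ^ p := by
  simpa using ENNReal.lintegral_mul_norm_pow_le hf (aemeasurable_const (b := 1)) hp₀
    (sub_nonneg.2 hp₁) (add_sub_cancel p 1)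

section Concentration

variable {X : Type*} [MeasurableSpace X] [PseudoMetricSpace X] [OpensMeasurableSpace X]
  [SecondCountableTopology X]

lemma measurable_measure_ball (ν : Measure X) [SFinite ν] (r : ℝ) :
    Measurable fun x ↦ ν (Metric.ball x r) :=
  measurable_measure_prodMk_left (measurableSet_lt (measurable_dist.comp measurable_swap)
    measurable_const : MeasurableSet {p : X × X | dist p.2 p.1 < r})

lemma lintegral_measure_ball_le (ρ ν : Measure X) [SFinite ρ] [SFinite ν] (r : ℝ) :
    ∫⁻ x, ν (Metric.ball x r) ∂ρ ≤ (⨆ y, ρ (Metric.ball y r)) * ν Set.univ := by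
  have hs : MeasurableSet {p : X × X | dist p.2 p.1 < r} :=
    measurableSet_lt (measurable_dist.comp measurable_swap) measurable_const
  calc ∫⁻ x, ν (Metric.ball x r) ∂ρ = ρ.prod ν {p | dist p.2 p.1 < r} :=
        (Measure.prod_apply hs).symm
    _ = ∫⁻ y, ρ {x | dist y x < r} ∂ν := Measure.prod_apply_symm hs
    _ ≤ ∫⁻ _, ⨆ y, ρ (Metric.ball y r) ∂ν :=
        lintegral_mono fun y ↦ le_iSup_of_le y (by simp_rw [dist_comm y]; rfl)
    _ = _ := lintegral_const _

end Concentration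

section Entropy

lemma phiEnt_zero : phiEnt 0 = 1 := if_pos rfl

lemma phiEnt_top : phiEnt ⊤ = ⊤ := by simp [phiEnt]

lemma phiEnt_of_ne_top {u : ℝ≥0∞} (hu : u ≠ ⊤) :
    phiEnt u = ENNReal.ofReal (u.toReal * log u.toReal - u.toReal + 1) := by
  rcases eq_or_ne u 0 with rfl | h
  · simp [phiEnt]
  · simp [phiEnt, h, hu]

lemma measurable_phiEnt : Measurable phiEnt := by
  unfold phiEnt
  exact Measurable.ite measurableSet_eq measurable_const
    (Measurable.ite measurableSet_eq measurable_const (by fun_prop))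

lemma mul_log_add_one_sub_le {x a : ℝ} (hx : 0 ≤ x) (ha : 0 < a) :
    x * log a + 1 - a ≤ x * log x - x + 1 := by
  rcases hx.eq_or_lt with rfl | hx
  · simpa using ha.le
  have h := Real.one_sub_inv_le_log_of_pos (div_pos hx ha)
  rw [inv_div, Real.log_div hx.ne' ha.ne'] at h
  have : x * (1 - a / x) = x - a := by field_simp
  nlinarith

lemma ofReal_log_mul_le_phiEnt {a : ℝ} (ha : 0 < a) (u : ℝ≥0∞) :
    ENNReal.ofReal (log a) * u ≤ phiEnt u + ENNReal.ofReal (a - 1) := by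
  rcases eq_or_ne u ⊤ with rfl | hu
  · simp [phiEnt_top]
  calc ENNReal.ofReal (log a) * u = ENNReal.ofReal (log a * u.toReal) := by
        rw [ENNReal.ofReal_mul' ENNReal.toReal_nonneg, ENNReal.ofReal_toReal hu]
    _ ≤ ENNReal.ofReal ((u.toReal * log u.toReal - u.toReal + 1) + (a - 1)) :=
        ENNReal.ofReal_le_ofReal (by linarith [mul_log_add_one_sub_le u.toReal_nonneg ha])
    _ ≤ phiEnt u + ENNReal.ofReal (a - 1) := phiEnt_of_ne_top hu ▸ ENNReal.ofReal_add_le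

lemma ofReal_one_sub_le_phiEnt {a : ℝ} (ha : 0 < a) (u : ℝ≥0∞) :
    ENNReal.ofReal (1 - a) ≤ phiEnt u + ENNReal.ofReal (-log a) * u := by
  rcases eq_or_ne u ⊤ with rfl | hu
  · simp [phiEnt_top]
  calc ENNReal.ofReal (1 - a)
      ≤ ENNReal.ofReal ((u.toReal * log u.toReal - u.toReal + 1) + -log a * u.toReal) :=
        ENNReal.ofReal_le_ofReal (by linarith [mul_log_add_one_sub_le u.toReal_nonneg ha])
    _ ≤ phiEnt u + ENNReal.ofReal (-log a * u.toReal) := phiEnt_of_ne_top hu ▸ ENNReal.ofReal_add_le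
    _ = phiEnt u + ENNReal.ofReal (-log a) * u := by
        rw [ENNReal.ofReal_mul' ENNReal.toReal_nonneg, ENNReal.ofReal_toReal hu]

variable {X : Type*} [MeasurableSpace X]

lemma ofReal_log_mul_lintegral_le {μ : Measure X} {f : X → ℝ≥0∞} (hf : Measurable f)
    {a : ℝ} (ha : 0 < a) :
    ENNReal.ofReal (log a) * ∫⁻ y, f y ∂μ
      ≤ ∫⁻ y, phiEnt (f y) ∂μ + ENNReal.ofReal (a - 1) * μ Set.univ :=
  calc ENNReal.ofReal (log a) * ∫⁻ y, f y ∂μ = ∫⁻ y, ENNReal.ofReal (log a) * f y ∂μ :=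
        (lintegral_const_mul _ hf).symm
    _ ≤ ∫⁻ y, (phiEnt (f y) + ENNReal.ofReal (a - 1)) ∂μ :=
        lintegral_mono fun y ↦ ofReal_log_mul_le_phiEnt ha (f y)
    _ = _ := by rw [lintegral_add_right _ measurable_const, lintegral_const]

lemma ofReal_one_sub_mul_measure_univ_le {μ : Measure X} {f : X → ℝ≥0∞} (hf : Measurable f)
    {a : ℝ} (ha : 0 < a) :
    ENNReal.ofReal (1 - a) * μ Set.univ
      ≤ ∫⁻ y, phiEnt (f y) ∂μ + ENNReal.ofReal (-log a) * ∫⁻ y, f y ∂μ :=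
  calc ENNReal.ofReal (1 - a) * μ Set.univ = ∫⁻ _, ENNReal.ofReal (1 - a) ∂μ :=
        (lintegral_const _).symm
    _ ≤ ∫⁻ y, (phiEnt (f y) + ENNReal.ofReal (-log a) * f y) ∂μ :=
        lintegral_mono fun y ↦ ofReal_one_sub_le_phiEnt ha (f y)
    _ = _ := by rw [lintegral_add_right _ (hf.const_mul _), lintegral_const_mul _ hf]

/-- Take the supporting lines of `φ` of slopes `log s` at the mass `m` and `-log s` under the
integral; the two `m log s` terms cancel. -/
lemma ofReal_one_add_sq_le_phiEnt_add {μ : Measure X} {f : X → ℝ≥0∞} (hf : Measurable f)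
    {s : ℝ} (hs : 0 < s) (hμ : μ Set.univ = ENNReal.ofReal (s ^ 2)) :
    ENNReal.ofReal (1 + s ^ 2)
      ≤ phiEnt (∫⁻ y, f y ∂μ) + ∫⁻ y, phiEnt (f y) ∂μ + ENNReal.ofReal (2 * s) := by
  set m := ∫⁻ y, f y ∂μ
  set I := ∫⁻ y, phiEnt (f y) ∂μ
  rcases le_total s 1 with hs1 | hs1
  · have hmass : ENNReal.ofReal (s⁻¹ - 1) * μ Set.univ = ENNReal.ofReal (s - s ^ 2) := by
      rw [hμ, ← ENNReal.ofReal_mul (sub_nonneg.2 ((one_le_inv₀ hs).2 hs1))]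
      congr 1
      field_simp
    have hm : ENNReal.ofReal (1 - s) ≤ phiEnt m + ENNReal.ofReal (-log s) * m :=
      ofReal_one_sub_le_phiEnt hs m
    have hI : ENNReal.ofReal (-log s) * m ≤ I + ENNReal.ofReal (s - s ^ 2) := by
      simpa only [Real.log_inv, hmass] using ofReal_log_mul_lintegral_le (μ := μ) hf (inv_pos.2 hs)
    rw [show 1 + s ^ 2 = 1 - s - (s - s ^ 2) + 2 * s by ring]
    refine ENNReal.ofReal_sub_add_le_of_le_add_ofReal (by nlinarith) (by nlinarith) ?_
    calc ENNReal.ofReal (1 - s) ≤ phiEnt m + ENNReal.ofReal (-log s) * m := hm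
      _ ≤ phiEnt m + (I + ENNReal.ofReal (s - s ^ 2)) := by gcongr
      _ = phiEnt m + I + ENNReal.ofReal (s - s ^ 2) := (add_assoc _ _ _).symm
  · have hmass : ENNReal.ofReal (1 - s⁻¹) * μ Set.univ = ENNReal.ofReal (s ^ 2 - s) := by
      rw [hμ, ← ENNReal.ofReal_mul (sub_nonneg.2 (inv_le_one_of_one_le₀ hs1))]
      congr 1
      field_simp
    have hm : ENNReal.ofReal (log s) * m ≤ phiEnt m + ENNReal.ofReal (s - 1) :=
      ofReal_log_mul_le_phiEnt hs m
    have hI : ENNReal.ofReal (s ^ 2 - s) ≤ I + ENNReal.ofReal (log s) * m := by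
      simpa only [Real.log_inv, neg_neg, hmass] using
        ofReal_one_sub_mul_measure_univ_le (μ := μ) hf (inv_pos.2 hs)
    rw [show 1 + s ^ 2 = s ^ 2 - s - (s - 1) + 2 * s by ring]
    refine ENNReal.ofReal_sub_add_le_of_le_add_ofReal (by linarith) (by linarith) ?_
    calc ENNReal.ofReal (s ^ 2 - s) ≤ I + ENNReal.ofReal (log s) * m := hI
      _ ≤ I + (phiEnt m + ENNReal.ofReal (s - 1)) := by gcongr
      _ = phiEnt m + I + ENNReal.ofReal (s - 1) := by ring

lemma one_add_measure_univ_le_phiEnt_add {μ : Measure X} [IsFiniteMeasure μ] {f : X → ℝ≥0∞}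
    (hf : Measurable f) :
    1 + μ Set.univ
      ≤ phiEnt (∫⁻ y, f y ∂μ) + ∫⁻ y, phiEnt (f y) ∂μ + 2 * μ Set.univ ^ (1 / 2 : ℝ) := by
  set s := √(μ Set.univ).toReal
  have hμ : μ Set.univ = ENNReal.ofReal (s ^ 2) := by
    rw [Real.sq_sqrt ENNReal.toReal_nonneg, ENNReal.ofReal_toReal (measure_ne_top _ _)]
  rcases (show 0 ≤ s from Real.sqrt_nonneg _).eq_or_lt with hs | hs
  · obtain rfl : μ = 0 := Measure.measure_univ_eq_zero.1 (by simp [hμ, ← hs])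
    simp [phiEnt_zero]
  have hsqrt : μ Set.univ ^ (1 / 2 : ℝ) = ENNReal.ofReal s := by
    rw [hμ, ENNReal.ofReal_rpow_of_nonneg (sq_nonneg _) (by norm_num), ← Real.sqrt_eq_rpow,
      Real.sqrt_sq hs.le]
  calc 1 + μ Set.univ = ENNReal.ofReal (1 + s ^ 2) := by
        rw [hμ, ENNReal.ofReal_add zero_le_one (sq_nonneg _), ENNReal.ofReal_one]
    _ ≤ _ := ofReal_one_add_sq_le_phiEnt_add hf hs hμ
    _ = _ := by rw [hsqrt, ENNReal.ofReal_mul zero_le_two, ENNReal.ofReal_ofNat]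

end Entropy

section KL

variable {X : Type*} [MeasurableSpace X]

lemma absolutelyContinuous_of_KLdiv_ne_top {σ μ : Measure X} (h : KLdiv σ μ ≠ ⊤) : σ ≪ μ := by
  by_contra hσμ
  exact h (if_neg hσμ)

lemma KLdiv_zero_left (μ : Measure X) : KLdiv 0 μ = μ Set.univ := by
  rw [KLdiv, if_pos (Measure.AbsolutelyContinuous.zero μ), ← lintegral_one]
  refine lintegral_congr_ae ((Measure.rnDeriv_zero μ).mono fun y hy ↦ ?_)
  simp [hy, phiEnt_zero]

lemma KLdiv_dirac_of_absolutelyContinuous [MeasurableSingletonClass X] {σ : Measure X}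
    [SFinite σ] {x : X} (h : σ ≪ Measure.dirac x) :
    KLdiv σ (Measure.dirac x) = phiEnt (σ Set.univ) := by
  rw [KLdiv, if_pos h, lintegral_dirac, ← Measure.lintegral_rnDeriv h, lintegral_dirac]

/-- The density vanishes off `S`, and `φ(0) = 1`. -/
lemma KLdiv_eq_setLIntegral_add_measure_compl {σ ν : Measure X} [SFinite σ]
    [SigmaFinite ν] (hσν : σ ≪ ν) {S : Set X} (hS : MeasurableSet S) (hσS : σ Sᶜ = 0) :
    KLdiv σ ν = ∫⁻ y in S, phiEnt (σ.rnDeriv ν y) ∂ν + ν Sᶜ := by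
  rw [KLdiv, if_pos hσν, ← lintegral_add_compl _ hS, ← setLIntegral_one Sᶜ]
  congr 1
  have hzero : σ.rnDeriv ν =ᵐ[ν.restrict Sᶜ] 0 :=
    (lintegral_eq_zero_iff (Measure.measurable_rnDeriv σ ν)).1
      ((Measure.setLIntegral_rnDeriv hσν Sᶜ).trans hσS)
  exact lintegral_congr_ae (hzero.mono fun y hy ↦ by simp [hy, phiEnt_zero])

lemma ae_fst_eq_of_map_fst_absolutelyContinuous_dirac [MeasurableSingletonClass X]
    {Y : Type*} [MeasurableSpace Y] {γ : Measure (X × Y)} {x : X}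
    (h : γ.map Prod.fst ≪ Measure.dirac x) : ∀ᵐ p ∂γ, p.1 = x :=
  ae_of_ae_map measurable_fst.aemeasurable
    (h.ae_le (show ∀ᵐ y ∂Measure.dirac x, y = x by simp [ae_dirac_eq]))

end KL

section HK

variable {X : Type*} [MeasurableSpace X] [PseudoMetricSpace X]

lemma HK2_zero_right_le (κ : ℝ) (μ : Measure X) : HK2 κ μ 0 ≤ μ Set.univ :=
  (iInf₂_le (0 : Measure (X × X)) (inferInstanceAs (IsFiniteMeasure 0))).trans_eq
    (by simp [KLdiv_zero_left])

lemma JDirac_zero_le (ρ : Measure X) (κ : ℝ) : JDirac ρ κ 0 ≤ ρ Set.univ :=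
  (lintegral_mono fun x ↦ (HK2_zero_right_le κ (Measure.dirac x)).trans_eq measure_univ).trans_eq
    lintegral_one

variable [OpensMeasurableSpace X] [SecondCountableTopology X]

lemma measurable_hkCost (κ : ℝ) : Measurable fun p : X × X ↦ hkCost κ p.1 p.2 := by
  unfold hkCost
  exact Measurable.ite (measurableSet_lt measurable_dist measurable_const)
    (by fun_prop) measurable_const

lemma ae_dist_lt_of_lintegral_hkCost_ne_top {κ : ℝ} {γ : Measure (X × X)}
    (h : ∫⁻ p, hkCost κ p.1 p.2 ∂γ ≠ ⊤) : ∀ᵐ p ∂γ, dist p.1 p.2 < κ * π / 2 := by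
  filter_upwards [ae_lt_top' (measurable_hkCost κ).aemeasurable h] with p hp
  by_contra hlt
  simp [hkCost, hlt] at hp

variable [MeasurableSingletonClass X]

lemma map_snd_compl_ball_eq_zero {κ : ℝ} {γ : Measure (X × X)}
    {x : X} (hc : ∫⁻ p, hkCost κ p.1 p.2 ∂γ ≠ ⊤) (hx : γ.map Prod.fst ≪ Measure.dirac x) :
    γ.map Prod.snd (Metric.ball x (κ * π / 2))ᶜ = 0 := by
  rw [Measure.map_apply measurable_snd measurableSet_ball.compl]
  have : ∀ᵐ p ∂γ, p.2 ∈ Metric.ball x (κ * π / 2) := by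
    filter_upwards [ae_fst_eq_of_map_fst_absolutelyContinuous_dirac hx,
      ae_dist_lt_of_lintegral_hkCost_ne_top hc] with p hp₁ hp₂
    rwa [Metric.mem_ball, dist_comm, ← hp₁]
  exact ae_iff.1 this

/-- A coupling of finite cost and entropy lives on `{x} × B(x, κπ/2)`; there `KL(γ₁|δₓ)` is
`φ` of the total mass, and the entropy inequality applies to the density of `γ₂` on the ball. -/
lemma one_add_measure_univ_le_of_coupling (κ : ℝ) (x : X) (ν : Measure X) [IsFiniteMeasure ν]
    (γ : Measure (X × X)) [IsFiniteMeasure γ] :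
    1 + ν Set.univ ≤ (∫⁻ p, hkCost κ p.1 p.2 ∂γ) + KLdiv (γ.map Prod.fst) (Measure.dirac x)
      + KLdiv (γ.map Prod.snd) ν + 2 * ν (Metric.ball x (κ * π / 2)) ^ (1 / 2 : ℝ) := by
  set S := Metric.ball x (κ * π / 2)
  by_cases hc : ∫⁻ p, hkCost κ p.1 p.2 ∂γ = ⊤
  · simp [hc]
  by_cases h₁ : KLdiv (γ.map Prod.fst) (Measure.dirac x) = ⊤
  · simp [h₁]
  by_cases h₂ : KLdiv (γ.map Prod.snd) ν = ⊤
  · simp [h₂]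
  have hac₁ := absolutelyContinuous_of_KLdiv_ne_top h₁
  have hac₂ := absolutelyContinuous_of_KLdiv_ne_top h₂
  have hS : γ.map Prod.snd Sᶜ = 0 := map_snd_compl_ball_eq_zero hc hac₁
  have hmass : ∫⁻ y in S, (γ.map Prod.snd).rnDeriv ν y ∂ν = γ.map Prod.fst Set.univ := by
    rw [Measure.setLIntegral_rnDeriv hac₂, measure_of_measure_compl_eq_zero hS,
      Measure.map_apply measurable_fst MeasurableSet.univ,
      Measure.map_apply measurable_snd MeasurableSet.univ]
    rfl
  have hentropy := one_add_measure_univ_le_phiEnt_add (μ := ν.restrict S)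
    (Measure.measurable_rnDeriv (γ.map Prod.snd) ν)
  rw [Measure.restrict_apply_univ, hmass] at hentropy
  rw [KLdiv_dirac_of_absolutelyContinuous hac₁,
    KLdiv_eq_setLIntegral_add_measure_compl hac₂ measurableSet_ball hS,
    ← measure_add_measure_compl (μ := ν) measurableSet_ball]
  calc 1 + (ν S + ν Sᶜ) = (1 + ν S) + ν Sᶜ := (add_assoc _ _ _).symm
    _ ≤ (phiEnt (γ.map Prod.fst Set.univ) + ∫⁻ y in S, phiEnt ((γ.map Prod.snd).rnDeriv ν y) ∂ν
          + 2 * ν S ^ (1 / 2 : ℝ)) + ν Sᶜ := by gcongr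
    _ = 0 + phiEnt (γ.map Prod.fst Set.univ)
          + (∫⁻ y in S, phiEnt ((γ.map Prod.snd).rnDeriv ν y) ∂ν + ν Sᶜ)
          + 2 * ν S ^ (1 / 2 : ℝ) := by ring
    _ ≤ _ := by gcongr; exact zero_le

lemma one_add_measure_univ_le_HK2_dirac (κ : ℝ) (x : X) (ν : Measure X) [IsFiniteMeasure ν] :
    1 + ν Set.univ
      ≤ HK2 κ (Measure.dirac x) ν + 2 * ν (Metric.ball x (κ * π / 2)) ^ (1 / 2 : ℝ) := by
  rw [HK2, ← tsub_le_iff_right]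
  exact le_iInf₂ fun γ _ ↦ tsub_le_iff_right.2 (one_add_measure_univ_le_of_coupling κ x ν γ)

end HK

theorem hk_dirac_mass_bound_general {d : ℕ} (Ω : Set (Ed d))
    (ρ : Measure ↥Ω) [IsProbabilityMeasure ρ] (κ : ℝ)
    (ν : Measure ↥Ω) (hν : PrimalMin ρ κ ν) :
    ν Set.univ ≤ 4 * ⨆ y : ↥Ω, ρ (Metric.ball y (κ * π / 2)) := by
  obtain ⟨hνfin, hmin⟩ := hν
  set F := fun x : ↥Ω ↦ ν (Metric.ball x (κ * π / 2))
  have hF : Measurable F := measurable_measure_ball ν _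
  have hJ : JDirac ρ κ ν ≤ 1 :=
    (hmin 0 inferInstance).trans ((JDirac_zero_le ρ κ).trans_eq measure_univ)
  have hintegrated : 1 + ν Set.univ ≤ 1 + 2 * (∫⁻ x, F x ∂ρ) ^ (1 / 2 : ℝ) :=
    calc 1 + ν Set.univ = ∫⁻ _, (1 + ν Set.univ) ∂ρ := by simp
      _ ≤ ∫⁻ x, (HK2 κ (Measure.dirac x) ν + 2 * F x ^ (1 / 2 : ℝ)) ∂ρ :=
          lintegral_mono fun x ↦ one_add_measure_univ_le_HK2_dirac κ x ν
      _ = JDirac ρ κ ν + 2 * ∫⁻ x, F x ^ (1 / 2 : ℝ) ∂ρ := by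
          rw [lintegral_add_right _ ((hF.pow_const _).const_mul _),
            lintegral_const_mul _ (hF.pow_const _)]
          rfl
      _ ≤ 1 + 2 * (∫⁻ x, F x ∂ρ) ^ (1 / 2 : ℝ) := by
          gcongr
          exact lintegral_rpow_le_rpow_lintegral hF.aemeasurable (by norm_num) (by norm_num)
  refine ENNReal.le_four_mul_of_le_two_mul_rpow_half (measure_ne_top ν _) ?_
  calc ν Set.univ ≤ 2 * (∫⁻ x, F x ∂ρ) ^ (1 / 2 : ℝ) :=
        (ENNReal.add_le_add_iff_left ENNReal.one_ne_top).1 hintegrated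
    _ ≤ 2 * ((⨆ y : ↥Ω, ρ (Metric.ball y (κ * π / 2))) * ν Set.univ) ^ (1 / 2 : ℝ) := by
        gcongr
        exact lintegral_measure_ball_le ρ ν _

/-- Mass bound for minimizers of `J_{ρ,κ}` in terms of the concentration of `ρ`. -/
theorem hk_dirac_mass_bound {d : ℕ} (Ω : Set (Ed d)) (hΩ₁ : IsCompact Ω)
    (hΩ₂ : Convex ℝ Ω) (hΩ₃ : (interior Ω).Nonempty)
    (ρ : Measure ↥Ω) [IsProbabilityMeasure ρ] (κ : ℝ) (hκ : 0 < κ)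
    (ν : Measure ↥Ω) (hν : PrimalMin ρ κ ν) :
    ν Set.univ ≤ 4 * ⨆ y : ↥Ω, ρ (Metric.ball y (κ * π / 2)) :=
  hk_dirac_mass_bound_general Ω ρ κ ν hν

end
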